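/- For any planar binary trees t and s, the set t + s (defined via the dendriform operations) equals the interval [t/s, t\s] in the Tamari lattice: t + s = { r : t/s ≤ r ≤ t\s }. -/

import Mathlib

/-- Planar binary rooted trees: either the trivial tree `leaf` (drawn `|`)
or the grafting `node l r = l ∨ r` of two trees. -/
inductive PBT : Type
  | leaf : PBT
  | node : PBT → PBT → PBT
deriving DecidableEq

namespace PBT

/-- Number of internal vertices of a tree. -/
def size : PBT → ℕ
  | leaf => 0
  | node l r => l.size + r.size + 1

/-- The dendriform sum of two trees, a set of trees:
`s + t = (s ⊣ t) ∪ (s ⊢ t)` with `s ⊣ t = sˡ ∨ (sʳ + t)`, `s ⊢ t = (s + tˡ) ∨ tʳ`,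
and the trivial tree acting as neutral element. -/
def addT : PBT → PBT → Set PBT
  | leaf, t => {t}
  | node l r, leaf => {node l r}
  | node l r, node l' r' =>
      (fun x => node l x) '' addT r (node l' r') ∪
      (fun x => node x r') '' addT (node l r) l'
termination_by s t => s.size + t.size
decreasing_by all_goals (simp [size] <;> omega)

/-- The left operation `s ⊣ t := sˡ ∨ (sʳ + t)` on trees (with `s ⊣ | = s`),
valued in sets of trees. -/
def leftT : PBT → PBT → Set PBT
  | leaf, _ => ∅
  | node l r, leaf => {node l r}
  | node l r, node l' r' => (fun x => node l x) '' addT r (node l' r')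

/-- The right operation `s ⊢ t := (s + tˡ) ∨ tʳ` on trees (with `| ⊢ t = t`),
valued in sets of trees. -/
def rightT : PBT → PBT → Set PBT
  | _, leaf => ∅
  | leaf, t => {t}
  | node l r, node l' r' => (fun x => node x r') '' addT (node l r) l'

/-- Elementwise extension of `⊣` to sets of trees. -/
def leftS (S T : Set PBT) : Set PBT := ⋃ s ∈ S, ⋃ t ∈ T, leftT s t

/-- Elementwise extension of `⊢` to sets of trees. -/
def rightS (S T : Set PBT) : Set PBT := ⋃ s ∈ S, ⋃ t ∈ T, rightT s t

/-- Elementwise extension of the sum `+` to sets of trees: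
`S + T = (S ⊣ T) ∪ (S ⊢ T)`. -/
def addS (S T : Set PBT) : Set PBT := ⋃ s ∈ S, ⋃ t ∈ T, addT s t

/-- A nonempty finite set of nontrivial trees. -/
def Good (S : Set PBT) : Prop := S.Nonempty ∧ S.Finite ∧ ∀ t ∈ S, t ≠ leaf

end PBT

namespace PBT

/-- One covering relation of the Tamari order: a single right rotation
`(a ∨ b) ∨ c ⟶ a ∨ (b ∨ c)` performed somewhere inside a tree. -/
inductive Rot : PBT → PBT → Prop
  | rotate (a b c : PBT) : Rot (node (node a b) c) (node a (node b c))
  | left {l l' : PBT} (r : PBT) : Rot l l' → Rot (node l r) (node l' r)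
  | right (l : PBT) {r r' : PBT} : Rot r r' → Rot (node l r) (node l r')

/-- The Tamari order: the partial order generated by the rotation covering
relations. -/
def TamariLE : PBT → PBT → Prop := Relation.ReflTransGen Rot

/-- `over t s = t/s`: graft the root of `t` on the leftmost leaf of `s`. -/
def overT (t : PBT) : PBT → PBT
  | leaf => t
  | node l r => node (overT t l) r

/-- `under t s = t\s`: graft the root of `s` on the rightmost leaf of `t`. -/
def under : PBT → PBT → PBT
  | leaf, s => s
  | node l r, s => node l (under r s)

end PBT


namespace PBT

lemma size_rot {x y : PBT} (h : Rot x y) : size x = size y := by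
  induction h with
  | rotate a b c => simp [size]; omega
  | left r h ih => simp [size, ih]
  | right l h ih => simp [size, ih]

lemma size_tamari {x y : PBT} (h : TamariLE x y) : size x = size y := by
  induction h with
  | refl => rfl
  | tail _ hr ih => rw [ih, size_rot hr]

/-- An energy strictly increasing along rotations. -/
def energy : PBT → ℕ
  | leaf => 0
  | node a b => energy a + energy b + size b

lemma energy_rot {x y : PBT} (h : Rot x y) : energy x < energy y := by
  induction h with
  | rotate a b c => simp [energy, size]; omega
  | left r h ih => simp [energy]; omega
  | right l h ih => have := size_rot h; simp [energy]; omega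

lemma energy_tamari {x y : PBT} (h : TamariLE x y) : energy x ≤ energy y := by
  induction h with
  | refl => exact le_refl _
  | tail _ hr ih => exact ih.trans (energy_rot hr).le

lemma tamari_antisymm {x y : PBT} (h1 : TamariLE x y) (h2 : TamariLE y x) : x = y := by
  rcases (Relation.reflTransGen_iff_eq_or_transGen ..).1 h1 with h | h
  · exact h.symm
  · rcases (Relation.reflTransGen_iff_eq_or_transGen ..).1 h2 with h' | h'
    · exact h'
    · exfalso
      have e1 : energy x < energy y := by
        clear h1 h2 h'
        induction h with
        | single hr => exact energy_rot hr
        | tail _ hr ih => exact ih.trans (energy_rot hr)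
      have e2 := energy_tamari h2
      omega

lemma tamari_node_left {a a' : PBT} (b : PBT) (h : TamariLE a a') :
    TamariLE (node a b) (node a' b) :=
  Relation.ReflTransGen.lift (fun x => node x b) (fun _ _ hr => Rot.left b hr) _ _ h

lemma tamari_node_right (a : PBT) {b b' : PBT} (h : TamariLE b b') :
    TamariLE (node a b) (node a b') :=
  Relation.ReflTransGen.lift (fun x => node a x) (fun _ _ hr => Rot.right a hr) _ _ h

lemma tamari_node {a a' b b' : PBT} (h1 : TamariLE a a') (h2 : TamariLE b b') :
    TamariLE (node a b) (node a' b') :=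
  (tamari_node_left b h1).trans (tamari_node_right a' h2)

lemma tamari_refl (a : PBT) : TamariLE a a := Relation.ReflTransGen.refl

lemma tamari_to_leaf {x : PBT} (h : TamariLE x leaf) : x = leaf := by
  induction h using Relation.ReflTransGen.head_induction_on with
  | refl => rfl
  | head hr h ih => subst ih; cases hr


/-- Sizes of the subtrees along the left spine. -/
def LSS : PBT → Set ℕ
  | leaf => {0}
  | node a b => insert (size a + size b + 1) (LSS a)

/-- Sizes of the subtrees along the right spine. -/
def RSS : PBT → Set ℕ
  | leaf => {0}
  | node a b => insert (size a + size b + 1) (RSS b)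

lemma mem_LSS_le {n : ℕ} : ∀ {t : PBT}, n ∈ LSS t → n ≤ size t := by
  intro t; induction t with
  | leaf => intro h; simp [LSS] at h; omega
  | node a b iha ihb =>
    intro h
    rcases h with h | h
    · simp [size]; omega
    · have := iha h; simp [size]; omega

lemma mem_RSS_le {n : ℕ} : ∀ {t : PBT}, n ∈ RSS t → n ≤ size t := by
  intro t; induction t with
  | leaf => intro h; simp [RSS] at h; omega
  | node a b iha ihb =>
    intro h
    rcases h with h | h
    · simp [size]; omega
    · have := ihb h; simp [size]; omega

lemma size_mem_LSS : ∀ t : PBT, size t ∈ LSS t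
  | leaf => by simp [LSS, size]
  | node a b => by simp [LSS, size]

lemma size_mem_RSS : ∀ t : PBT, size t ∈ RSS t
  | leaf => by simp [RSS, size]
  | node a b => by simp [RSS, size]

lemma LSS_rot {x y : PBT} (h : Rot x y) : LSS y ⊆ LSS x := by
  induction h with
  | rotate a b c =>
    intro n hn
    rcases hn with h | h
    · left; simp [size] at *; omega
    · right; right; exact h
  | left r h ih =>
    intro n hn
    rcases hn with h' | h'
    · left; rw [h', size_rot h]
    · right; exact ih h'
  | right l h ih =>
    intro n hn
    rcases hn with h' | h'
    · left; rw [h', size_rot h]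
    · right; exact h'

lemma RSS_rot {x y : PBT} (h : Rot x y) : RSS x ⊆ RSS y := by
  induction h with
  | rotate a b c =>
    intro n hn
    rcases hn with h | h
    · left; simp [size] at *; omega
    · right; right; exact h
  | left r h ih =>
    intro n hn
    rcases hn with h' | h'
    · left; rw [h', size_rot h]
    · right; exact h'
  | right l h ih =>
    intro n hn
    rcases hn with h' | h'
    · left; rw [h', size_rot h]
    · right; exact ih h'

lemma LSS_tamari {x y : PBT} (h : TamariLE x y) : LSS y ⊆ LSS x := by
  induction h with
  | refl => exact fun _ h => h
  | tail _ hr ih => exact (LSS_rot hr).trans ih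

lemma RSS_tamari {x y : PBT} (h : TamariLE x y) : RSS x ⊆ RSS y := by
  induction h with
  | refl => exact fun _ h => h
  | tail _ hr ih => exact ih.trans (RSS_rot hr)

/-- `SpineSplit z c w` : `z = b₁ ∨ (b₂ ∨ (… ∨ (bₘ ∨ w)))` and
`c = b₁ ∨ (b₂ ∨ (… ∨ bₘ))` for some initial segment of the right spine. -/
inductive SpineSplit : PBT → PBT → PBT → Prop
  | base (c w : PBT) : SpineSplit (node c w) c w
  | cons (p : PBT) {q c w : PBT} : SpineSplit q c w → SpineSplit (node p q) (node p c) w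

lemma spineSplit_size {z c w : PBT} (h : SpineSplit z c w) :
    size z = size c + size w + 1 := by
  induction h with
  | base c w => rfl
  | cons p h ih => simp [size]; omega

lemma spineSplit_unique {z c w c' w' : PBT} (h1 : SpineSplit z c w)
    (h2 : SpineSplit z c' w') (hw : size w = size w') : c = c' ∧ w = w' := by
  induction h1 generalizing c' w' with
  | base c w =>
    cases h2 with
    | base => exact ⟨rfl, rfl⟩
    | cons p h => have := spineSplit_size h; omega
  | cons p h ih =>
    cases h2 with
    | base => have := spineSplit_size h; omega
    | cons _ h' =>
      obtain ⟨rfl, rfl⟩ := ih h' hw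
      exact ⟨rfl, rfl⟩

lemma spineSplit_under : ∀ (x u v : PBT), SpineSplit (under x (node u v)) (under x u) v
  | leaf, u, v => SpineSplit.base u v
  | node x1 x2, u, v => SpineSplit.cons x1 (spineSplit_under x2 u v)

lemma spineSplit_comp {z c w d v : PBT} (h1 : SpineSplit z c w) (h2 : SpineSplit w d v) :
    ∃ e, SpineSplit z e v ∧ TamariLE (node c d) e := by
  induction h1 with
  | base c w => exact ⟨node c d, SpineSplit.cons c h2, tamari_refl _⟩
  | cons p h ih =>
    obtain ⟨e, he, hle⟩ := ih h2
    exact ⟨node p e, SpineSplit.cons p he,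
      Relation.ReflTransGen.head (Rot.rotate p _ d) (tamari_node_right p hle)⟩

lemma char_suff {z c w a b : PBT} (h : SpineSplit z c w) (ha : TamariLE a c)
    (hb : TamariLE b w) : TamariLE (node a b) z := by
  induction h generalizing a b with
  | base c w => exact tamari_node ha hb
  | cons p h ih =>
    have h1 : TamariLE (node _ b) _ := ih (tamari_refl _) hb
    exact (tamari_node_left b ha).trans
      (Relation.ReflTransGen.head (Rot.rotate p _ b) (tamari_node_right p h1))

lemma char_nec_aux : ∀ n : ℕ, ∀ x z : PBT, TamariLE x z → ∀ a b : PBT, x = node a b →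
    size a ≤ n → ∃ c w, SpineSplit z c w ∧ TamariLE a c ∧ TamariLE b w := by
  intro n
  induction n using Nat.strong_induction_on with
  | _ n IH =>
    intro x z h
    induction h using Relation.ReflTransGen.head_induction_on with
    | refl => exact fun a b hx _ => hx ▸ ⟨a, b, SpineSplit.base a b, tamari_refl _, tamari_refl _⟩
    | head hr h ih =>
      intro a b hx hn
      subst hx
      cases hr with
      | rotate a1 a2 =>
        have hs : size a1 ≤ n ∧ size a2 < n := by simp [size] at hn; omega
        obtain ⟨c, w, hsw, h1, h2⟩ := ih a1 (node a2 b) rfl hs.1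
        obtain ⟨c2, w2, hsw2, h3, h4⟩ := IH (size a2) hs.2 _ _ h2 a2 b rfl le_rfl
        obtain ⟨e, he, hcc⟩ := spineSplit_comp hsw hsw2
        exact ⟨e, w2, he, (tamari_node h1 h3).trans hcc, h4⟩
      | left _ hl =>
        obtain ⟨c, w, hsw, h1, h2⟩ := ih _ b rfl (by rw [← size_rot hl]; exact hn)
        exact ⟨c, w, hsw, Relation.ReflTransGen.head hl h1, h2⟩
      | right _ hrr =>
        obtain ⟨c, w, hsw, h1, h2⟩ := ih a _ rfl hn
        exact ⟨c, w, hsw, h1, Relation.ReflTransGen.head hrr h2⟩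

lemma char_nec {a b z : PBT} (h : TamariLE (node a b) z) :
    ∃ c w, SpineSplit z c w ∧ TamariLE a c ∧ TamariLE b w :=
  char_nec_aux (size a) _ _ h a b rfl le_rfl


lemma size_over (t : PBT) : ∀ s : PBT, size (overT t s) = size t + size s
  | leaf => rfl
  | node l r => by simp [overT, size, size_over t l]; omega

lemma size_under : ∀ t s : PBT, size (under t s) = size t + size s
  | leaf, s => by simp [under, size]
  | node l r, s => by simp [under, size, size_under r s]; omega

lemma over_leaf_left : ∀ s : PBT, overT leaf s = s
  | leaf => rfl
  | node l r => by simp [overT, over_leaf_left l]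

lemma under_leaf_right : ∀ t : PBT, under t leaf = t
  | leaf => rfl
  | node l r => by simp [under, under_leaf_right r]

/-- `(l ∨ r)/u ≤ l ∨ (r/u)`. -/
lemma tamari_over (l r : PBT) : ∀ u : PBT, TamariLE (overT (node l r) u) (node l (overT r u))
  | leaf => tamari_refl _
  | node p q =>
    (tamari_node_left q (tamari_over l r p)).trans
      (Relation.ReflTransGen.head (Rot.rotate l (overT r p) q) (tamari_refl _))

/-- `(r\u) ∨ v ≤ r\(u ∨ v)`. -/
lemma tamari_under : ∀ (r u v : PBT), TamariLE (node (under r u) v) (under r (node u v))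
  | leaf, _, _ => tamari_refl _
  | node r1 r2, u, v =>
    Relation.ReflTransGen.head (Rot.rotate r1 (under r2 u) v)
      (tamari_node_right r1 (tamari_under r2 u v))

/-- Key lemma: if `(l ∨ r)/u ≤ a ∨ w` with `a` of the same size as `l`,
then `l ≤ a` and `r/u ≤ w`. -/
lemma over_le_node {l r : PBT} : ∀ u a w : PBT,
    TamariLE (overT (node l r) u) (node a w) → size a = size l →
    TamariLE l a ∧ TamariLE (overT r u) w := by
  intro u
  induction u with
  | leaf =>
    intro a w h hs
    obtain ⟨c, w', hsw, h1, h2⟩ := char_nec h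
    cases hsw with
    | base => exact ⟨h1, h2⟩
    | cons _ hq =>
      exfalso
      have e1 := size_tamari h1
      simp [size] at e1
      omega
  | node p q ihp =>
    intro a w h hs
    obtain ⟨c, w', hsw, h1, h2⟩ := char_nec h
    cases hsw with
    | base =>
      exfalso
      have := size_tamari h1
      rw [size_over] at this
      simp [size] at this; omega
    | cons _ hq =>
      obtain ⟨hla, hrc⟩ := ihp _ _ h1 hs
      exact ⟨hla, char_suff hq hrc h2⟩

lemma mem_LSS_over {n : ℕ} (w : PBT) : ∀ u : PBT, n ∈ LSS (overT w u) →
    n ∈ LSS w ∨ size w ≤ n := by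
  intro u
  induction u with
  | leaf => exact fun h => Or.inl h
  | node p q ihp =>
    intro h
    rcases h with h | h
    · right; rw [h, size_over]; omega
    · exact ihp h

lemma mem_RSS_under {n : ℕ} (s : PBT) : ∀ x : PBT, n ∈ RSS (under x s) →
    n ∈ RSS s ∨ size s ≤ n := by
  intro x
  induction x with
  | leaf => exact fun h => Or.inl h
  | node x1 x2 _ ih2 =>
    intro h
    rcases h with h | h
    · right; rw [h, size_under]; omega
    · exact ih2 h


theorem addT_interval : ∀ n : ℕ, ∀ t s : PBT, size t + size s ≤ n →
    addT t s = {w : PBT | TamariLE (overT t s) w ∧ TamariLE w (under t s)} := by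
  intro n
  induction n using Nat.strong_induction_on with
  | _ n IH =>
    intro t s hn
    match t, s with
    | leaf, s =>
      ext w
      simp only [addT, Set.mem_singleton_iff, Set.mem_setOf_eq, over_leaf_left]
      constructor
      · rintro rfl; exact ⟨tamari_refl _, tamari_refl _⟩
      · rintro ⟨h1, h2⟩; exact (tamari_antisymm h1 h2).symm
    | node l r, leaf =>
      ext w
      simp only [addT, Set.mem_singleton_iff, Set.mem_setOf_eq, under_leaf_right]
      constructor
      · rintro rfl; exact ⟨tamari_refl _, tamari_refl _⟩
      · rintro ⟨h1, h2⟩; exact (tamari_antisymm h1 h2).symm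
    | node l r, node l' r' =>
      have hIH1 : addT r (node l' r') = {w : PBT | TamariLE (overT r (node l' r')) w ∧
          TamariLE w (under r (node l' r'))} := by
        apply IH (size r + size (node l' r')) ?_ r (node l' r') le_rfl
        simp only [size] at hn ⊢; omega
      have hIH2 : addT (node l r) l' = {w : PBT | TamariLE (overT (node l r) l') w ∧
          TamariLE w (under (node l r) l')} := by
        apply IH (size (node l r) + size l') ?_ (node l r) l' le_rfl
        simp only [size] at hn ⊢; omega
      ext w
      simp only [addT, Set.mem_union, Set.mem_image, Set.mem_setOf_eq]
      constructor
      · rintro (⟨x, hx, rfl⟩ | ⟨x, hx, rfl⟩)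
        · rw [hIH1] at hx
          obtain ⟨hx1, hx2⟩ := hx
          refine ⟨?_, tamari_node_right l hx2⟩
          show TamariLE (node (overT (node l r) l') r') (node l x)
          exact (tamari_node_left r' (tamari_over l r l')).trans
            (Relation.ReflTransGen.head (Rot.rotate l (overT r l') r')
              (tamari_node_right l hx1))
        · rw [hIH2] at hx
          obtain ⟨hx1, hx2⟩ := hx
          refine ⟨tamari_node_left r' hx1, ?_⟩
          show TamariLE (node x r') (node l (under r (node l' r')))
          exact (tamari_node_left r' hx2).trans
            (Relation.ReflTransGen.head (Rot.rotate l (under r l') r')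
              (tamari_node_right l (tamari_under r l' r')))
      · rintro ⟨hlow, hup⟩
        cases w with
        | leaf => exact absurd (tamari_to_leaf hlow) (by simp [overT])
        | node a b =>
          have hsz : size a + size b + 1 =
              (size l + size r + 1) + (size l' + size r' + 1) := by
            have h := size_tamari hlow
            rw [size_over] at h
            simp only [size] at h
            omega
          have hr'b : size r' ≤ size b := by
            have hmem : size r' ∈ RSS (overT (node l r) (node l' r')) :=
              Or.inr (size_mem_RSS r')
            rcases RSS_tamari hlow hmem with h | h
            · exfalso; omega
            · exact mem_RSS_le h
          have hbmem : size b ∈ RSS (under r (node l' r')) := by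
            have hmem : size b ∈ RSS (node a b) := Or.inr (size_mem_RSS b)
            rcases RSS_tamari hup hmem with h | h
            · exfalso
              rw [size_under] at h
              simp only [size] at h
              omega
            · exact h
          by_cases hb : size b = size r'
          · -- `w` lies in the right part `(t + l') ∨ r'`
            obtain ⟨c, w', hsw, h1, h2⟩ := char_nec hlow
            cases hsw with
            | base =>
              obtain ⟨c2, w2, hsw2, h3, h4⟩ := char_nec hup
              cases hsw2 with
              | base =>
                exfalso
                have h5 := size_tamari h4
                rw [size_under] at h5
                simp only [size] at h5
                omega
              | cons _ hq =>
                obtain ⟨he1, he2⟩ := spineSplit_unique hq (spineSplit_under r l' r')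
                  ((size_tamari h4).symm.trans hb)
                have hbr' : b = r' := tamari_antisymm (he2 ▸ h4) h2
                refine Or.inr ⟨a, ?_, by rw [hbr']⟩
                rw [hIH2]
                refine ⟨h1, ?_⟩
                show TamariLE a (node l (under r l'))
                exact he1 ▸ h3
            | cons _ hq =>
              exfalso
              have h5 := spineSplit_size hq
              have h6 := size_tamari h2
              omega
          · -- `w` lies in the left part `l ∨ (r + s)`
            have hbs : size l' + size r' + 1 ≤ size b := by
              rcases mem_RSS_under (node l' r') r hbmem with h | h
              · rcases h with h' | h'
                · omega
                · exact absurd (Nat.le_antisymm (mem_RSS_le h') hr'b) hb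
              · simpa [size] using h
            have hal : size a = size l := by
              have h1 : size l ≤ size a := by
                have hmem : size l ∈ LSS (under (node l r) (node l' r')) :=
                  Or.inr (size_mem_LSS l)
                rcases LSS_tamari hup hmem with h | h
                · exfalso; omega
                · exact mem_LSS_le h
              have ha2 : size a ∈ LSS (overT (node l r) (node l' r')) :=
                LSS_tamari hlow (Or.inr (size_mem_LSS a))
              rcases ha2 with h | h
              · exfalso
                rw [size_over] at h
                simp only [size] at h
                omega
              · rcases mem_LSS_over (node l r) l' h with h' | h'
                · rcases h' with h'' | h''
                  · exfalso; omega
                  · have := mem_LSS_le h''; omega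
                · exfalso; simp only [size] at h'; omega
            obtain ⟨c2, w2, hsw2, h3, h4⟩ := char_nec hup
            cases hsw2 with
            | cons _ hq =>
              exfalso
              have h5 := size_tamari h3
              have h6 := spineSplit_size hq
              simp only [size] at h5
              omega
            | base =>
              obtain ⟨c, w', hsw, h1, h2⟩ := char_nec hlow
              cases hsw with
              | base =>
                exfalso
                have h5 := size_tamari h1
                rw [size_over] at h5
                simp only [size] at h5
                omega
              | cons _ hq =>
                obtain ⟨hla2, hrc⟩ := over_le_node l' a _ h1 hal
                have ha : a = l := tamari_antisymm h3 hla2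
                refine Or.inl ⟨b, ?_, by rw [ha]⟩
                rw [hIH1]
                exact ⟨char_suff hq hrc h2, h4⟩

end PBT

open PBT in



/-- The sum `t + s` of two planar binary trees (via the dendriform operations)
is exactly the interval `[t/s, t\s]` of the Tamari lattice. -/
theorem addT_eq_tamari_interval (t s : PBT) :
    addT t s = {r : PBT | TamariLE (overT t s) r ∧ TamariLE r (under t s)} :=
  PBT.addT_interval (size t + size s) t s le_rfl
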